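/- For all integers n ≥ 3 and k with 2 ≤ k ≤ n−2, the cardinality of N(H_k) satisfies (n−k)·(n−2)! − C(n−k,2)·(n−3)! ≤ |N(H_k)| ≤ (n−k)·(n−2)!. -/

import Mathlib

open Finset Equiv

/-- `H_k ⊂ Σ_n`: permutations `σ` with `σ(1) ≠ 1` and `σ(i) = i` for all
`i ∈ [k+1, n]` (0-indexed: `σ 0 ≠ 0` and `σ i = i` for all `i` with `k ≤ i`). -/
def Hfam (n k : ℕ) : Finset (Equiv.Perm (Fin n)) :=
  Finset.univ.filter fun σ =>
    (∀ i : Fin n, i.val = 0 → σ i ≠ i) ∧ ∀ i : Fin n, k ≤ i.val → σ i = i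

/-- `N(H_k)`: permutations `π` with `π(1) = 1` intersecting every member of `H_k`. -/
def Nfam (n k : ℕ) : Finset (Equiv.Perm (Fin n)) :=
  Finset.univ.filter fun π =>
    (∀ i : Fin n, i.val = 0 → π i = i) ∧ ∀ σ ∈ Hfam n k, ∃ i, π i = σ i

/-- `E_k = H_k ∪ N(H_k)`. -/
def Efam (n k : ℕ) : Finset (Equiv.Perm (Fin n)) := Hfam n k ∪ Nfam n k



lemma card_fixing {n : ℕ} (s : Finset (Fin n)) :
    (Finset.univ.filter fun π : Equiv.Perm (Fin n) => ∀ a ∈ s, π a = a).card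
      = Nat.factorial (n - s.card) := by
  classical
  rw [← Fintype.card_subtype]
  have e1 : {π : Equiv.Perm (Fin n) // ∀ a ∈ s, π a = a}
      ≃ {π : Equiv.Perm (Fin n) // ∀ a, ¬ (a ∉ s) → π a = a} :=
    Equiv.subtypeEquivRight (by intro π; simp)
  have e2 := (Equiv.Perm.subtypeEquivSubtypePerm (fun a : Fin n => a ∉ s)).symm
  rw [Fintype.card_congr (e1.trans e2), Fintype.card_perm]
  congr 1
  rw [Fintype.card_subtype_compl, Fintype.card_fin]
  congr 1
  simp [Fintype.card_subtype]

lemma bonferroni {ι α : Type*} [LinearOrder ι] [DecidableEq ι] [DecidableEq α]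
    (t : Finset ι) (f : ι → Finset α) :
    (∑ i ∈ t, ((f i).card : ℤ))
        - ∑ i ∈ t, ∑ j ∈ t.filter (· < i), (((f j ∩ f i).card : ℤ))
      ≤ ((t.biUnion f).card : ℤ) := by
  induction t using Finset.induction_on_max with
  | empty => simp
  | insert a s ha ih =>
    have hans : a ∉ s := fun h => lt_irrefl a (ha a h)
    have hfa : (insert a s).filter (· < a) = s := by
      ext x
      simp only [mem_filter, mem_insert]
      constructor
      · rintro ⟨h1 | h1, h2⟩
        · exact absurd h2 (by simp [h1])
        · exact h1
      · exact fun hx => ⟨Or.inr hx, ha x hx⟩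
    have hfi : ∀ i ∈ s, (insert a s).filter (· < i) = s.filter (· < i) := by
      intro i hi
      ext x
      simp only [mem_filter, mem_insert]
      constructor
      · rintro ⟨h1 | h1, h2⟩
        · exact absurd h2 (by simp [h1]; exact le_of_lt (ha i hi))
        · exact ⟨h1, h2⟩
      · exact fun hx => ⟨Or.inr hx.1, hx.2⟩
    have hps : ∑ i ∈ insert a s, ∑ j ∈ (insert a s).filter (· < i), ((f j ∩ f i).card : ℤ)
        = (∑ j ∈ s, ((f j ∩ f a).card : ℤ))
          + ∑ i ∈ s, ∑ j ∈ s.filter (· < i), ((f j ∩ f i).card : ℤ) := by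
      rw [Finset.sum_insert hans, hfa]
      congr 1
      exact Finset.sum_congr rfl fun i hi => by rw [hfi i hi]
    rw [Finset.biUnion_insert, Finset.sum_insert hans, hps]
    have hU := Finset.card_union_add_card_inter (f a) (s.biUnion f)
    have hIsub : f a ∩ s.biUnion f = s.biUnion fun j => f j ∩ f a := by
      ext x; simp only [mem_inter, mem_biUnion]; tauto
    have hI : ((f a ∩ s.biUnion f).card : ℤ) ≤ ∑ j ∈ s, ((f j ∩ f a).card : ℤ) := by
      rw [hIsub]
      exact_mod_cast Nat.cast_le.mpr (Finset.card_biUnion_le)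
    have hU' : ((f a ∪ s.biUnion f).card : ℤ) + ((f a ∩ s.biUnion f).card : ℤ)
        = (f a).card + ((s.biUnion f).card : ℤ) := by exact_mod_cast hU
    linarith

lemma sum_card_lt {ι : Type*} [LinearOrder ι] [DecidableEq ι] (t : Finset ι) :
    ∑ i ∈ t, (t.filter (· < i)).card = t.card.choose 2 := by
  induction t using Finset.induction_on_max with
  | empty => simp
  | insert a s ha ih =>
    have hans : a ∉ s := fun h => lt_irrefl a (ha a h)
    have hfa : (insert a s).filter (· < a) = s := by
      ext x
      simp only [mem_filter, mem_insert]
      constructor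
      · rintro ⟨h1 | h1, h2⟩
        · exact absurd h2 (by simp [h1])
        · exact h1
      · exact fun hx => ⟨Or.inr hx, ha x hx⟩
    have hfi : ∀ i ∈ s, (insert a s).filter (· < i) = s.filter (· < i) := by
      intro i hi
      ext x
      simp only [mem_filter, mem_insert]
      constructor
      · rintro ⟨h1 | h1, h2⟩
        · exact absurd h2 (by simp [h1]; exact le_of_lt (ha i hi))
        · exact ⟨h1, h2⟩
      · exact fun hx => ⟨Or.inr hx.1, hx.2⟩
    rw [Finset.sum_insert hans, hfa, Finset.card_insert_of_notMem hans]
    rw [show ∑ i ∈ s, ((insert a s).filter (· < i)).card = ∑ i ∈ s, (s.filter (· < i)).card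
      from Finset.sum_congr rfl fun i hi => by rw [hfi i hi], ih]
    have : (s.card + 1).choose 2 = s.card.choose 1 + s.card.choose 2 := Nat.choose_succ_succ _ _
    rw [this, Nat.choose_one_right]

lemma exists_avoid {n k : ℕ} (hn : 3 ≤ n) (hk2 : 2 ≤ k) (hkn : k ≤ n)
    (π : Equiv.Perm (Fin n)) (h0 : π ⟨0, by omega⟩ = ⟨0, by omega⟩)
    (hfix : ∀ j : Fin n, k ≤ j.val → π j ≠ j) :
    ∃ σ : Equiv.Perm (Fin n), (∀ i : Fin n, i.val = 0 → σ i ≠ i) ∧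
      (∀ i : Fin n, k ≤ i.val → σ i = i) ∧ ∀ i, σ i ≠ π i := by
  classical
  haveI : NeZero k := ⟨by omega⟩
  set c : Fin k → Fin n := Fin.castLE hkn with hc
  have hcinj : Function.Injective c := Fin.castLE_injective hkn
  have hcval : ∀ i : Fin k, (c i).val = i.val := fun i => rfl
  set A : Finset (Fin k) := Finset.univ.filter fun i => (π (c i)).val < k with hA
  set f : Fin k → Fin k := fun i =>
    if h : (π (c i)).val < k then ⟨(π (c i)).val, h⟩ else i with hf
  have hfA : ∀ i ∈ A, (f i).val = (π (c i)).val := by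
    intro i hi
    rw [hA, Finset.mem_filter] at hi
    simp [hf, hi.2]
  have hinjA : Set.InjOn f A := by
    intro i hi j hj hij
    have : (π (c i)).val = (π (c j)).val := by
      rw [← hfA i hi, ← hfA j hj, hij]
    exact hcinj (π.injective (Fin.ext this))
  set B : Finset (Fin k) := A.image f with hB
  have hAB : A.card = B.card := (Finset.card_image_of_injOn hinjA).symm
  have hcompl : Aᶜ.card = Bᶜ.card := by
    rw [Finset.card_compl, Finset.card_compl, hAB]
  set e := Finset.equivOfCardEq hcompl with he
  set g0 : Fin k → Fin k := fun i =>
    if h : i ∈ A then f i else (e ⟨i, Finset.mem_compl.mpr h⟩ : Fin k) with hg0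
  have hg0A : ∀ i ∈ A, g0 i = f i := by intro i hi; simp [hg0, hi]
  have hg0inj : Function.Injective g0 := by
    intro i j hij
    by_cases hi : i ∈ A <;> by_cases hj : j ∈ A
    · rw [hg0A i hi, hg0A j hj] at hij; exact hinjA hi hj hij
    · rw [hg0A i hi] at hij
      simp only [hg0, dif_neg hj] at hij
      have h1 : f i ∈ B := Finset.mem_image_of_mem f hi
      have h2 := Finset.mem_compl.mp (e ⟨j, Finset.mem_compl.mpr hj⟩).2
      exact absurd (hij ▸ h1) h2
    · rw [hg0A j hj] at hij
      simp only [hg0, dif_neg hi] at hij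
      have h1 : f j ∈ B := Finset.mem_image_of_mem f hj
      have h2 := Finset.mem_compl.mp (e ⟨i, Finset.mem_compl.mpr hi⟩).2
      exact absurd (hij ▸ h1) h2
    · simp only [hg0, dif_neg hi, dif_neg hj] at hij
      have h3 := e.injective (Subtype.coe_injective hij)
      exact congrArg Subtype.val h3
  set g : Equiv.Perm (Fin k) :=
    Equiv.ofBijective g0 (Finite.injective_iff_bijective.mp hg0inj) with hg
  have hgapp : ∀ i, g i = g0 i := fun i => rfl
  have hone : (1 : Fin k) ≠ 0 := by
    intro h
    have := congrArg Fin.val h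
    rw [Fin.val_one', Nat.mod_eq_of_lt (by omega)] at this
    simp at this
  have hsucc : ∀ i : Fin k, i + 1 ≠ i := by
    intro i h
    apply hone
    have h2 : i + 1 = i + 0 := by rw [h, add_zero]
    exact add_left_cancel h2
  have hgne : ∀ i : Fin k, g (i + 1) ≠ g i := fun i h => hsucc i (g.injective h)
  set σ0 : Fin n → Fin n := fun i =>
    if h : i.val < k then c (g (⟨i.val, h⟩ + 1)) else i with hσ0
  have hσ0lt : ∀ (i : Fin n) (h : i.val < k), σ0 i = c (g (⟨i.val, h⟩ + 1)) := by
    intro i h; simp [hσ0, h]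
  have hσ0ge : ∀ i : Fin n, k ≤ i.val → σ0 i = i := by
    intro i h; simp [hσ0, Nat.not_lt.mpr h]
  have hσ0inj : Function.Injective σ0 := by
    intro i j hij
    by_cases hi : i.val < k <;> by_cases hj : j.val < k
    · rw [hσ0lt i hi, hσ0lt j hj] at hij
      have h3 := add_right_cancel (g.injective (hcinj hij))
      have h4 : (⟨i.val, hi⟩ : Fin k).val = (⟨j.val, hj⟩ : Fin k).val := congrArg Fin.val h3
      exact Fin.ext h4
    · rw [hσ0lt i hi, hσ0ge j (Nat.not_lt.mp hj)] at hij
      have hval : j.val < k := by rw [← hij]; exact (g (⟨i.val, hi⟩ + 1)).isLt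
      exact absurd hval hj
    · rw [hσ0ge i (Nat.not_lt.mp hi), hσ0lt j hj] at hij
      have hval : i.val < k := by rw [hij]; exact (g (⟨j.val, hj⟩ + 1)).isLt
      exact absurd hval hi
    · rw [hσ0ge i (Nat.not_lt.mp hi), hσ0ge j (Nat.not_lt.mp hj)] at hij
      exact hij
  set σ : Equiv.Perm (Fin n) :=
    Equiv.ofBijective σ0 (Finite.injective_iff_bijective.mp hσ0inj) with hσ
  have hσapp : ∀ i, σ i = σ0 i := fun i => rfl
  have hk0 : (0 : ℕ) < k := by omega
  have hcz : c ⟨0, hk0⟩ = ⟨0, by omega⟩ := rfl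
  have hzA : (⟨0, hk0⟩ : Fin k) ∈ A := by
    rw [hA, Finset.mem_filter]
    refine ⟨Finset.mem_univ _, ?_⟩
    rw [hcz, h0]
    exact hk0
  have hgz : g ⟨0, hk0⟩ = ⟨0, hk0⟩ := by
    rw [hgapp, hg0A _ hzA]
    apply Fin.ext
    rw [hfA _ hzA, hcz, h0]
  refine ⟨σ, ?_, ?_, ?_⟩
  · intro i hi
    have hiz : i = ⟨0, by omega⟩ := Fin.ext hi
    rw [hiz, hσapp, hσ0lt _ hk0]
    intro h
    have h2 : g (⟨0, hk0⟩ + 1) = ⟨0, hk0⟩ := hcinj (h.trans hcz.symm)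
    exact hgne ⟨0, hk0⟩ (h2.trans hgz.symm)
  · intro i hi; rw [hσapp, hσ0ge i hi]
  · intro i
    by_cases hi : i.val < k
    · rw [hσapp, hσ0lt i hi]
      by_cases hπ : (π i).val < k
      · have hiA : (⟨i.val, hi⟩ : Fin k) ∈ A := by
          rw [hA, Finset.mem_filter]
          exact ⟨Finset.mem_univ _, by rw [show c ⟨i.val, hi⟩ = i from Fin.ext rfl]; exact hπ⟩
        have hgi : c (g ⟨i.val, hi⟩) = π i := by
          rw [hgapp, hg0A _ hiA]
          apply Fin.ext
          rw [hcval, hfA _ hiA, show c ⟨i.val, hi⟩ = i from Fin.ext rfl]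
        intro h
        exact hgne ⟨i.val, hi⟩ (hcinj (h.trans hgi.symm))
      · intro h
        have := (g (⟨i.val, hi⟩ + 1)).isLt
        rw [← hcval (g (⟨i.val, hi⟩ + 1)), h] at this
        omega
    · rw [hσapp, hσ0ge i (Nat.not_lt.mp hi)]
      exact fun h => hfix i (Nat.not_lt.mp hi) h.symm


lemma Nfam_eq {n k : ℕ} (hn : 3 ≤ n) (hk2 : 2 ≤ k) (hkn : k ≤ n - 2) :
    Nfam n k = Finset.univ.filter fun π : Equiv.Perm (Fin n) =>
      π ⟨0, by omega⟩ = ⟨0, by omega⟩ ∧ ∃ j : Fin n, k ≤ j.val ∧ π j = j := by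
  have hkn' : k ≤ n := by omega
  ext π
  simp only [Nfam, Finset.mem_filter, Finset.mem_univ, true_and]
  constructor
  · rintro ⟨h1, h2⟩
    refine ⟨h1 _ rfl, ?_⟩
    by_contra hcon
    push_neg at hcon
    obtain ⟨σ, hσ1, hσ2, hσ3⟩ := exists_avoid hn hk2 hkn' π (h1 _ rfl) fun j hj => hcon j hj
    obtain ⟨i, hi⟩ := h2 σ (by rw [Hfam, Finset.mem_filter]; exact ⟨Finset.mem_univ _, hσ1, hσ2⟩)
    exact hσ3 i hi.symm
  · rintro ⟨hz, j, hj, hπj⟩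
    refine ⟨fun i hi => by rw [show i = (⟨0, by omega⟩ : Fin n) from Fin.ext hi]; exact hz, ?_⟩
    intro σ hσ
    rw [Hfam, Finset.mem_filter] at hσ
    exact ⟨j, by rw [hπj, hσ.2.2 j hj]⟩

theorem card_Nfam_bounds (n k : ℕ) (hn : 3 ≤ n) (hk2 : 2 ≤ k) (hkn : k ≤ n - 2) :
    ((n - k : ℕ) : ℤ) * (Nat.factorial (n - 2) : ℤ)
        - (Nat.choose (n - k) 2 : ℤ) * (Nat.factorial (n - 3) : ℤ)
      ≤ ((Nfam n k).card : ℤ) ∧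
    ((Nfam n k).card : ℤ) ≤ ((n - k : ℕ) : ℤ) * (Nat.factorial (n - 2) : ℤ) := by
  have hkn' : k ≤ n := by omega
  have hzlt : (0:ℕ) < n := by omega
  set z : Fin n := ⟨0, hzlt⟩ with hzdef
  set Af : Fin n → Finset (Equiv.Perm (Fin n)) :=
    fun j => Finset.univ.filter fun π => π z = z ∧ π j = j with hAf
  set t : Finset (Fin n) := Finset.univ.filter fun j : Fin n => k ≤ j.val with ht
  have hNS : Nfam n k = t.biUnion Af := by
    rw [Nfam_eq hn hk2 hkn]
    ext π
    simp only [Finset.mem_filter, Finset.mem_biUnion, Finset.mem_univ, true_and, hAf, ht]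
    constructor
    · rintro ⟨h1, j, hj1, hj2⟩; exact ⟨j, hj1, h1, hj2⟩
    · rintro ⟨j, hj1, h1, hj2⟩; exact ⟨h1, j, hj1, hj2⟩
  have htcard : t.card = n - k := by
    have hmap : t = Finset.map ⟨fun i : Fin (n - k) => (⟨k + i.val, by omega⟩ : Fin n),
        fun a b hab => by
          have h2 := congrArg Fin.val hab
          simp only [] at h2
          exact Fin.ext (by omega)⟩ Finset.univ := by
      ext x
      simp only [ht, Finset.mem_filter, Finset.mem_univ, true_and, Finset.mem_map,
        Function.Embedding.coeFn_mk]
      constructor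
      · intro hx
        exact ⟨⟨x.val - k, by omega⟩, Fin.ext (show k + (x.val - k) = x.val by omega)⟩
      · rintro ⟨i, _, rfl⟩
        exact Nat.le_add_right _ _
    rw [hmap, Finset.card_map, Finset.card_univ, Fintype.card_fin]
  have hAcard : ∀ j ∈ t, (Af j).card = Nat.factorial (n - 2) := by
    intro j hj
    rw [ht, Finset.mem_filter] at hj
    have hzj : z ≠ j := by
      intro h
      have := congrArg Fin.val h
      simp only [hzdef] at this
      omega
    have heq : Af j = Finset.univ.filter fun π : Equiv.Perm (Fin n) =>
        ∀ a ∈ ({z, j} : Finset (Fin n)), π a = a := by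
      ext π
      simp only [hAf, Finset.mem_filter, Finset.mem_univ, true_and, Finset.mem_insert,
        Finset.mem_singleton]
      constructor
      · rintro ⟨h1, h2⟩ a ha
        rcases ha with rfl | rfl <;> assumption
      · intro h
        exact ⟨h z (Or.inl rfl), h j (Or.inr rfl)⟩
    rw [heq, card_fixing]
    congr 1
    rw [Finset.card_insert_of_notMem (by simpa using hzj), Finset.card_singleton]
  have hAAcard : ∀ i ∈ t, ∀ j ∈ t, i ≠ j → (Af i ∩ Af j).card = Nat.factorial (n - 3) := by
    intro i hi j hj hij
    rw [ht, Finset.mem_filter] at hi hj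
    have hzi : z ≠ i := by
      intro h; have := congrArg Fin.val h; simp only [hzdef] at this; omega
    have hzj : z ≠ j := by
      intro h; have := congrArg Fin.val h; simp only [hzdef] at this; omega
    have heq : Af i ∩ Af j = Finset.univ.filter fun π : Equiv.Perm (Fin n) =>
        ∀ a ∈ ({z, i, j} : Finset (Fin n)), π a = a := by
      ext π
      simp only [Finset.mem_inter, hAf, Finset.mem_filter, Finset.mem_univ, true_and,
        Finset.mem_insert, Finset.mem_singleton]
      constructor
      · rintro ⟨⟨h1, h2⟩, ⟨h3, h4⟩⟩ a ha
        rcases ha with rfl | rfl | rfl <;> assumption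
      · intro h
        exact ⟨⟨h z (Or.inl rfl), h i (Or.inr (Or.inl rfl))⟩,
          ⟨h z (Or.inl rfl), h j (Or.inr (Or.inr rfl))⟩⟩
    rw [heq, card_fixing]
    congr 1
    rw [Finset.card_insert_of_notMem (by simp [hzi, hzj]),
      Finset.card_insert_of_notMem (by simpa using hij), Finset.card_singleton]
  have hsum1 : ∑ i ∈ t, ((Af i).card : ℤ) = ((n - k : ℕ) : ℤ) * (Nat.factorial (n - 2) : ℤ) := by
    rw [Finset.sum_congr rfl (fun i hi => by rw [hAcard i hi]), Finset.sum_const, htcard]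
    ring
  have hsum2 : ∑ i ∈ t, ∑ j ∈ t.filter (· < i), ((Af j ∩ Af i).card : ℤ)
      = ((Nat.choose (n - k) 2 : ℕ) : ℤ) * (Nat.factorial (n - 3) : ℤ) := by
    have hinner : ∀ i ∈ t, ∑ j ∈ t.filter (· < i), ((Af j ∩ Af i).card : ℤ)
        = ((t.filter (· < i)).card : ℤ) * (Nat.factorial (n - 3) : ℤ) := by
      intro i hi
      rw [Finset.sum_congr rfl fun j hj => by
        rw [hAAcard j (Finset.mem_of_mem_filter j hj) i hi
          (ne_of_lt (Finset.mem_filter.mp hj).2)], Finset.sum_const, nsmul_eq_mul]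
    rw [Finset.sum_congr rfl hinner, ← Finset.sum_mul]
    congr 1
    rw [← Nat.cast_sum, sum_card_lt, htcard]
  constructor
  · have hlb := bonferroni t Af
    rw [hsum1, hsum2] at hlb
    rw [hNS]
    exact hlb
  · rw [hNS]
    have h1 : (t.biUnion Af).card ≤ ∑ j ∈ t, (Af j).card := Finset.card_biUnion_le
    have h2 : ((t.biUnion Af).card : ℤ) ≤ ∑ j ∈ t, ((Af j).card : ℤ) := by
      rw [← Nat.cast_sum]; exact_mod_cast h1
    exact h2.trans (le_of_eq hsum1)
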